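/- The function κ is differentiable on (2,∞), and for every x > 2 its derivative is given by κ'(x) = Λ({0})/2 + ∫_0^1 (1−y)^{x−1} log(1/(1−y)) T(y) dy. -/

import Mathlib

open MeasureTheory Real Set Filter Topology

/-- The integrand of `mu`, with its continuous extension `x(x-1)/2` at `p = 0`. -/
noncomputable def muInt (x p : ℝ) : ℝ :=
  if p = 0 then x * (x - 1) / 2
  else (x * p - 1 + (1 - p) ^ x) / p ^ 2

/-- The rate of decrease `μ(x)` of the `Λ`-coalescent. -/
noncomputable def mu (Λ : Measure ℝ) (x : ℝ) : ℝ :=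
  ∫ p in Set.Icc (0:ℝ) 1, muInt x p ∂Λ

/-- The rate of decrease per capita `κ(x) = μ(x)/x`. -/
noncomputable def kappa (Λ : Measure ℝ) (x : ℝ) : ℝ := mu Λ x / x

/-- `T(y) = ∫_{(y,1]} p⁻² Λ(dp)`. -/
noncomputable def T (Λ : Measure ℝ) (y : ℝ) : ℝ :=
  ∫ p in Set.Ioc y 1, 1 / p ^ 2 ∂Λ

/-!
For `0 < p ≤ 1`, the `x`-derivative of `(x p - 1 + (1 - p) ^ x) / (p ^ 2 x)` is
`p⁻² ∫₀ᵖ (1 - y) ^ (x - 1) log (1 / (1 - y)) dy`, because `(1 - y) ^ x (x log (1 - y) - 1) / x²`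
is a primitive of this kernel.
For `x ≥ 2` the kernel is at most `y`, so this derivative lies in `[0, 1/2]`, as does the
derivative `1/2` of the atom term `(x - 1) / 2` at `p = 0`. This uniform bound allows
differentiating `κ(x) = ∫ muInt x p / x Λ(dp)` under the integral sign, and Fubini on
`{0 < y < p ≤ 1}` turns `∫ p⁻² ∫₀ᵖ … dy Λ(dp)` into `∫₀¹ … T(y) dy`.
-/

section SqueezedBelowId

variable {g : ℝ → ℝ}

lemma intervalIntegrable_of_nonneg_of_le_id (hg : Measurable g)
    (hg0 : ∀ y ∈ Icc (0 : ℝ) 1, 0 ≤ g y) (hg1 : ∀ y ∈ Icc (0 : ℝ) 1, g y ≤ y)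
    {p : ℝ} (hp0 : 0 ≤ p) (hp1 : p ≤ 1) :
    IntervalIntegrable g volume 0 p := by
  rw [intervalIntegrable_iff_integrableOn_Ioc_of_le hp0]
  refine Integrable.mono' (integrable_const 1) hg.aestronglyMeasurable ?_
  filter_upwards [ae_restrict_mem measurableSet_Ioc] with y hy
  have hy' : y ∈ Icc (0 : ℝ) 1 := ⟨hy.1.le, hy.2.trans hp1⟩
  rw [norm_of_nonneg (hg0 y hy')]
  exact (hg1 y hy').trans hy'.2

lemma integral_div_sq_mem_Icc_of_le_id (hg : Measurable g)
    (hg0 : ∀ y ∈ Icc (0 : ℝ) 1, 0 ≤ g y) (hg1 : ∀ y ∈ Icc (0 : ℝ) 1, g y ≤ y)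
    {p : ℝ} (hp : p ∈ Ioc (0 : ℝ) 1) :
    (∫ y in 0..p, g y) / p ^ 2 ∈ Icc 0 (1 / 2) := by
  have hp0 : 0 < p := hp.1
  have hle : ∫ y in 0..p, g y ≤ ∫ y in 0..p, y :=
    intervalIntegral.integral_mono_on hp0.le
      (intervalIntegrable_of_nonneg_of_le_id hg hg0 hg1 hp0.le hp.2)
      intervalIntegral.intervalIntegrable_id fun y hy => hg1 y ⟨hy.1, hy.2.trans hp.2⟩
  rw [integral_id] at hle
  rw [mem_Icc, div_le_iff₀ (by positivity)]
  refine ⟨div_nonneg ?_ (sq_nonneg p), by linarith⟩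
  exact intervalIntegral.integral_nonneg hp0.le fun y hy => hg0 y ⟨hy.1, hy.2.trans hp.2⟩

lemma setIntegral_Ioc_ite_lt {p : ℝ} (hp0 : 0 ≤ p) (hp1 : p ≤ 1) :
    ∫ y in Ioc (0 : ℝ) 1, (if y < p then g y else 0) = ∫ y in 0..p, g y := by
  change ∫ y in Ioc (0 : ℝ) 1, (Iio p).indicator g y = _
  rw [integral_indicator measurableSet_Iio, Measure.restrict_restrict measurableSet_Iio,
    intervalIntegral.integral_of_le hp0, integral_Ioc_eq_integral_Ioo]
  congr 2
  ext y
  simp only [mem_inter_iff, mem_Iio, mem_Ioo, mem_Ioc]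
  exact ⟨fun h => ⟨h.2.1, h.1⟩, fun h => ⟨h.2, h.1, by linarith [h.2]⟩⟩

lemma setIntegral_Ioc_ite_gt (μ : Measure ℝ) {y : ℝ} (hy : 0 ≤ y) :
    ∫ p in Ioc (0 : ℝ) 1, (if y < p then g p else 0) ∂μ = ∫ p in Ioc y 1, g p ∂μ := by
  change ∫ p in Ioc (0 : ℝ) 1, (Ioi y).indicator g p ∂μ = _
  rw [integral_indicator measurableSet_Ioi, Measure.restrict_restrict measurableSet_Ioi]
  congr 2
  ext p
  simp only [mem_inter_iff, mem_Ioi, mem_Ioc]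
  exact ⟨fun h => ⟨h.1, h.2.2⟩, fun h => ⟨h.1, by linarith [h.1], h.2⟩⟩

variable (Λ : Measure ℝ) [IsFiniteMeasure Λ]

lemma integrable_ite_div_sq (hg : Measurable g)
    (hg0 : ∀ y ∈ Icc (0 : ℝ) 1, 0 ≤ g y) (hg1 : ∀ y ∈ Icc (0 : ℝ) 1, g y ≤ y) :
    Integrable (fun q : ℝ × ℝ => if q.2 < q.1 then g q.2 / q.1 ^ 2 else 0)
      ((Λ.restrict (Ioc 0 1)).prod (volume.restrict (Ioc 0 1))) := by
  have hmeas : Measurable fun q : ℝ × ℝ => if q.2 < q.1 then g q.2 / q.1 ^ 2 else 0 :=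
    Measurable.ite (measurableSet_lt measurable_snd measurable_fst) (by fun_prop) measurable_const
  have hnonneg : ∀ p, ∀ y ∈ Ioc (0 : ℝ) 1, 0 ≤ if y < p then g y / p ^ 2 else 0 := by
    intro p y hy
    split_ifs
    exacts [div_nonneg (hg0 y (Ioc_subset_Icc_self hy)) (sq_nonneg p), le_rfl]
  rw [integrable_prod_iff hmeas.aestronglyMeasurable]
  constructor
  · filter_upwards [ae_restrict_mem measurableSet_Ioc] with p hp
    refine Integrable.mono' (integrable_const (1 / p ^ 2))
      (hmeas.comp measurable_prodMk_left).aestronglyMeasurable ?_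
    filter_upwards [ae_restrict_mem measurableSet_Ioc] with y hy
    rw [norm_of_nonneg (hnonneg p y hy)]
    split_ifs
    · exact div_le_div_of_nonneg_right ((hg1 y (Ioc_subset_Icc_self hy)).trans hy.2)
        (sq_nonneg p)
    · positivity
  refine Integrable.mono' (integrable_const (1 / 2))
    hmeas.norm.stronglyMeasurable.integral_prod_right'.aestronglyMeasurable ?_
  filter_upwards [ae_restrict_mem measurableSet_Ioc] with p hp
  have hint : ∫ y in Ioc (0 : ℝ) 1, ‖if y < p then g y / p ^ 2 else 0‖
      = (∫ y in 0..p, g y) / p ^ 2 := by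
    rw [← intervalIntegral.integral_div, ← setIntegral_Ioc_ite_lt hp.1.le hp.2]
    exact setIntegral_congr_fun measurableSet_Ioc fun y hy => norm_of_nonneg (hnonneg p y hy)
  obtain ⟨h0, h1⟩ := integral_div_sq_mem_Icc_of_le_id hg hg0 hg1 hp
  rwa [hint, norm_of_nonneg h0]

lemma integral_Ioc_integral_div_sq_eq (hg : Measurable g)
    (hg0 : ∀ y ∈ Icc (0 : ℝ) 1, 0 ≤ g y) (hg1 : ∀ y ∈ Icc (0 : ℝ) 1, g y ≤ y) :
    ∫ p in Ioc (0 : ℝ) 1, (∫ y in 0..p, g y) / p ^ 2 ∂Λ = ∫ y in 0..1, g y * T Λ y := by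
  calc ∫ p in Ioc (0 : ℝ) 1, (∫ y in 0..p, g y) / p ^ 2 ∂Λ
      = ∫ p in Ioc (0 : ℝ) 1, (∫ y in Ioc (0 : ℝ) 1, if y < p then g y / p ^ 2 else 0) ∂Λ := by
        refine setIntegral_congr_fun measurableSet_Ioc fun p hp => ?_
        rw [setIntegral_Ioc_ite_lt hp.1.le hp.2, intervalIntegral.integral_div]
    _ = ∫ y in Ioc (0 : ℝ) 1, ∫ p in Ioc (0 : ℝ) 1, (if y < p then g y / p ^ 2 else 0) ∂Λ :=
        integral_integral_swap (integrable_ite_div_sq Λ hg hg0 hg1)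
    _ = ∫ y in 0..1, g y * T Λ y := by
        rw [intervalIntegral.integral_of_le zero_le_one]
        refine setIntegral_congr_fun measurableSet_Ioc fun y hy => ?_
        simp only [setIntegral_Ioc_ite_gt Λ hy.1.le, T, ← integral_const_mul, mul_one_div]

end SqueezedBelowId

noncomputable def kappaKernel (x y : ℝ) : ℝ := (1 - y) ^ (x - 1) * log (1 / (1 - y))

lemma kappaKernel_nonneg {x y : ℝ} (hy0 : 0 ≤ y) (hy1 : y ≤ 1) : 0 ≤ kappaKernel x y := by
  rcases hy1.eq_or_lt with rfl | hy1
  · simp [kappaKernel]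
  · exact mul_nonneg (rpow_nonneg (by linarith) _)
      (log_nonneg (one_le_one_div (by linarith) (by linarith)))

lemma kappaKernel_le {x y : ℝ} (hx : 2 ≤ x) (hy0 : 0 ≤ y) (hy1 : y ≤ 1) :
    kappaKernel x y ≤ y := by
  rcases hy1.eq_or_lt with rfl | hy1
  · simp [kappaKernel]
  have hu : 0 < 1 - y := by linarith
  have hlog : 0 ≤ log (1 / (1 - y)) := log_nonneg (one_le_one_div hu (by linarith))
  calc kappaKernel x y ≤ (1 - y) ^ (1 : ℝ) * log (1 / (1 - y)) :=
        mul_le_mul_of_nonneg_right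
          (rpow_le_rpow_of_exponent_ge hu (by linarith) (by linarith)) hlog
    _ ≤ (1 - y) * (1 / (1 - y) - 1) := by
        rw [rpow_one]
        exact mul_le_mul_of_nonneg_left (log_le_sub_one_of_pos (by positivity)) hu.le
    _ = y := by field_simp; ring

lemma measurable_kappaKernel (x : ℝ) : Measurable (kappaKernel x) := by
  unfold kappaKernel
  fun_prop

lemma integral_kappaKernel {x p : ℝ} (hx : 2 ≤ x) (hp0 : 0 ≤ p) (hp1 : p ≤ 1) :
    ∫ y in 0..p, kappaKernel x y
      = (1 - (1 - p) ^ x + x * (1 - p) ^ x * log (1 - p)) / x ^ 2 := by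
  set F : ℝ → ℝ := fun y => (1 - y) ^ x * log (1 - y) / x - (1 - y) ^ x / x ^ 2
  -- `u ^ x * log u = u ^ (x - 1) * (u * log u)` is continuous up to `u = 0`.
  have hcont : ContinuousOn F (Icc 0 p) := by
    have hG : Continuous fun y : ℝ =>
        (1 - y) ^ (x - 1) * ((1 - y) * log (1 - y)) / x - (1 - y) ^ x / x ^ 2 := by
      have : Continuous fun y : ℝ => (1 - y) * log (1 - y) :=
        continuous_mul_log.comp (by fun_prop)
      fun_prop (disch := first | linarith | (intros; right; linarith))
    refine hG.continuousOn.congr fun y hy => ?_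
    simp only [F, ← mul_assoc, ← rpow_add_one' (by linarith [hy.2] : 0 ≤ 1 - y)
      (by linarith : x - 1 + 1 ≠ 0), sub_add_cancel]
  have hderiv : ∀ y ∈ Ioo 0 p, HasDerivWithinAt F (kappaKernel x y) (Ioi y) y := by
    intro y hy
    have hu : 0 < 1 - y := by linarith [hy.2]
    have h1 : HasDerivAt (fun y : ℝ => 1 - y) (-1) y := by
      simpa using (hasDerivAt_id y).const_sub 1
    have h2 := h1.rpow_const (p := x) (Or.inl hu.ne')
    refine ((((h2.mul (h1.log hu.ne')).div_const x).sub
      (h2.div_const (x ^ 2))).congr_deriv ?_).hasDerivWithinAt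
    have hxe : (1 - y) ^ x = (1 - y) ^ (x - 1) * (1 - y) := by
      rw [← rpow_add_one hu.ne', sub_add_cancel]
    rw [kappaKernel, hxe, one_div, log_inv]
    field_simp
    ring
  rw [intervalIntegral.integral_eq_sub_of_hasDeriv_right_of_le hp0 hcont hderiv
    (intervalIntegrable_of_nonneg_of_le_id (measurable_kappaKernel x)
      (fun y hy => kappaKernel_nonneg hy.1 hy.2) (fun y hy => kappaKernel_le hx hy.1 hy.2)
      hp0 hp1)]
  simp only [F, sub_zero, one_rpow, log_one]
  field_simp
  ring

lemma one_sub_rpow_le {x p : ℝ} (hx : 2 ≤ x) (hp0 : 0 ≤ p) (hp1 : p ≤ 1) :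
    (1 - p) ^ x ≤ 1 - x * p + x * (x - 1) / 2 * p ^ 2 := by
  have hderiv : ∀ t ∈ uIcc (0 : ℝ) p, HasDerivAt (fun t : ℝ => x * t + (1 - t) ^ x)
      (x - x * (1 - t) ^ (x - 1)) t := by
    intro t _
    have h1 : HasDerivAt (fun t : ℝ => 1 - t) (-1) t := by
      simpa using (hasDerivAt_id t).const_sub 1
    refine (((hasDerivAt_id t).const_mul x).add
      (h1.rpow_const (Or.inr (by linarith)))).congr_deriv ?_
    ring
  have hcont : Continuous fun t : ℝ => x - x * (1 - t) ^ (x - 1) := by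
    fun_prop (disch := linarith)
  have hbernoulli : ∀ t ∈ Icc (0 : ℝ) p, x - x * (1 - t) ^ (x - 1) ≤ x * (x - 1) * t := by
    intro t ht
    have := one_add_mul_self_le_rpow_one_add (s := -t) (by linarith [ht.2])
      (by linarith : 1 ≤ x - 1)
    rw [← sub_eq_add_neg] at this
    nlinarith
  have := intervalIntegral.integral_mono_on hp0 (hcont.intervalIntegrable (μ := volume) 0 p)
    ((by fun_prop : Continuous fun t : ℝ => x * (x - 1) * t).intervalIntegrable 0 p) hbernoulli
  rw [intervalIntegral.integral_eq_sub_of_hasDerivAt hderiv (hcont.intervalIntegrable _ _),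
    intervalIntegral.integral_const_mul, integral_id] at this
  simp only [mul_zero, sub_zero, one_rpow, zero_add] at this
  linarith

lemma muInt_mem_Icc {x p : ℝ} (hx : 2 ≤ x) (hp : p ∈ Icc (0 : ℝ) 1) :
    muInt x p ∈ Icc 0 (x * (x - 1) / 2) := by
  rcases hp.1.eq_or_lt with rfl | hp0
  · rw [muInt, if_pos rfl]
    exact ⟨by nlinarith, le_rfl⟩
  rw [muInt, if_neg hp0.ne', mem_Icc, div_le_iff₀ (by positivity)]
  have hbernoulli := one_add_mul_self_le_rpow_one_add (s := -p) (by linarith [hp.2])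
    (by linarith : 1 ≤ x)
  rw [← sub_eq_add_neg] at hbernoulli
  exact ⟨div_nonneg (by nlinarith) (sq_nonneg p), by linarith [one_sub_rpow_le hx hp.1 hp.2]⟩

lemma measurable_muInt (x : ℝ) : Measurable (muInt x) := by
  unfold muInt
  exact Measurable.ite (measurableSet_singleton 0) measurable_const (by fun_prop)

/-- `∂ₓ (muInt x p / x)`; at `p = 0` the function differentiated is `(x - 1) / 2`. -/
noncomputable def kappaDerivIntegrand (x p : ℝ) : ℝ :=
  if p = 0 then 1 / 2
  else (1 - (1 - p) ^ x + x * (1 - p) ^ x * log (1 - p)) / (x ^ 2 * p ^ 2)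

lemma kappaDerivIntegrand_eq {x p : ℝ} (hx : 2 ≤ x) (hp : p ∈ Ioc (0 : ℝ) 1) :
    kappaDerivIntegrand x p = (∫ y in 0..p, kappaKernel x y) / p ^ 2 := by
  rw [kappaDerivIntegrand, if_neg hp.1.ne', integral_kappaKernel hx hp.1.le hp.2, div_div]

lemma kappaDerivIntegrand_mem_Icc {x p : ℝ} (hx : 2 ≤ x) (hp : p ∈ Icc (0 : ℝ) 1) :
    kappaDerivIntegrand x p ∈ Icc 0 (1 / 2) := by
  rcases hp.1.eq_or_lt with rfl | hp0
  · simp [kappaDerivIntegrand]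
  rw [kappaDerivIntegrand_eq hx ⟨hp0, hp.2⟩]
  exact integral_div_sq_mem_Icc_of_le_id (measurable_kappaKernel x)
    (fun y hy => kappaKernel_nonneg hy.1 hy.2) (fun y hy => kappaKernel_le hx hy.1 hy.2)
    ⟨hp0, hp.2⟩

lemma measurable_kappaDerivIntegrand (x : ℝ) : Measurable (kappaDerivIntegrand x) := by
  unfold kappaDerivIntegrand
  exact Measurable.ite (measurableSet_singleton 0) measurable_const (by fun_prop)

lemma hasDerivAt_const_rpow_of_nonneg {a x : ℝ} (ha : 0 ≤ a) (hx : x ≠ 0) :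
    HasDerivAt (fun y => a ^ y) (a ^ x * log a) x := by
  rcases ha.eq_or_lt with rfl | ha
  · rw [log_zero, mul_zero]
    refine (hasDerivAt_const x (0 : ℝ)).congr_of_eventuallyEq ?_
    filter_upwards [eventually_ne_nhds hx] with y hy
    exact zero_rpow hy
  · exact (hasStrictDerivAt_const_rpow ha x).hasDerivAt

lemma hasDerivAt_muInt_div {x p : ℝ} (hx : x ≠ 0) (hp : p ∈ Icc (0 : ℝ) 1) :
    HasDerivAt (fun x => muInt x p / x) (kappaDerivIntegrand x p) x := by
  rcases hp.1.eq_or_lt with rfl | hp0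
  · have hd : HasDerivAt (fun x : ℝ => (x - 1) / 2) (1 / 2) x := by
      simpa using ((hasDerivAt_id x).sub_const 1).div_const 2
    rw [kappaDerivIntegrand, if_pos rfl]
    refine hd.congr_of_eventuallyEq ?_
    filter_upwards [eventually_ne_nhds hx] with y hy
    rw [muInt, if_pos rfl]
    field_simp
  have hN : HasDerivAt (fun x : ℝ => x * p - 1 + (1 - p) ^ x)
      (p + (1 - p) ^ x * log (1 - p)) x :=
    (((hasDerivAt_id x).mul_const p).sub_const 1).add
      (hasDerivAt_const_rpow_of_nonneg (by linarith [hp.2]) hx) |>.congr_deriv (by simp)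
  have hD : HasDerivAt (fun x : ℝ => p ^ 2 * x) (p ^ 2) x := by
    simpa using (hasDerivAt_id x).const_mul (p ^ 2)
  simp only [muInt, if_neg hp0.ne', div_div, kappaDerivIntegrand]
  refine (hN.div hD (by positivity)).congr_deriv ?_
  field_simp
  ring

section

variable (Λ : Measure ℝ) [IsFiniteMeasure Λ]

lemma hasDerivAt_kappa {x : ℝ} (hx : 2 < x) :
    HasDerivAt (kappa Λ) (∫ p in Icc (0 : ℝ) 1, kappaDerivIntegrand x p ∂Λ) x := by
  have hkappa : kappa Λ = fun x => ∫ p in Icc (0 : ℝ) 1, muInt x p / x ∂Λ := by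
    funext x
    rw [kappa, mu, integral_div]
  have hint : IntegrableOn (fun p => muInt x p / x) (Icc 0 1) Λ := by
    refine (Integrable.mono' (integrable_const (x * (x - 1) / 2))
      (measurable_muInt x).aestronglyMeasurable ?_).div_const x
    filter_upwards [ae_restrict_mem measurableSet_Icc] with p hp
    obtain ⟨h0, h1⟩ := muInt_mem_Icc hx.le hp
    rwa [norm_of_nonneg h0]
  rw [hkappa]
  refine (hasDerivAt_integral_of_dominated_loc_of_deriv_le (Ioi_mem_nhds hx)
    (Eventually.of_forall fun x => ((measurable_muInt x).div_const x).aestronglyMeasurable)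
    hint (measurable_kappaDerivIntegrand x).aestronglyMeasurable ?_ (integrable_const (1 / 2))
    ?_).2
  · filter_upwards [ae_restrict_mem measurableSet_Icc] with p hp x' hx'
    obtain ⟨h0, h1⟩ := kappaDerivIntegrand_mem_Icc (le_of_lt hx') hp
    rwa [norm_of_nonneg h0]
  · filter_upwards [ae_restrict_mem measurableSet_Icc] with p hp x' hx'
    exact hasDerivAt_muInt_div (by linarith [mem_Ioi.1 hx']) hp

lemma integral_kappaDerivIntegrand {x : ℝ} (hx : 2 ≤ x) :
    ∫ p in Icc (0 : ℝ) 1, kappaDerivIntegrand x p ∂Λ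
      = (Λ {0}).toReal / 2 + ∫ y in 0..1, kappaKernel x y * T Λ y := by
  have hint : IntegrableOn (kappaDerivIntegrand x) (Icc 0 1) Λ := by
    refine Integrable.mono' (integrable_const (1 / 2))
      (measurable_kappaDerivIntegrand x).aestronglyMeasurable ?_
    filter_upwards [ae_restrict_mem measurableSet_Icc] with p hp
    obtain ⟨h0, h1⟩ := kappaDerivIntegrand_mem_Icc hx hp
    rwa [norm_of_nonneg h0]
  rw [← Ioc_union_left zero_le_one, union_comm, setIntegral_union (by simp) measurableSet_Ioc
    (hint.mono_set (by simp)) (hint.mono_set Ioc_subset_Icc_self), integral_singleton,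
    ← integral_Ioc_integral_div_sq_eq Λ (measurable_kappaKernel x)
      (fun y hy => kappaKernel_nonneg hy.1 hy.2) (fun y hy => kappaKernel_le hx hy.1 hy.2)]
  congr 1
  · simp [kappaDerivIntegrand, measureReal_def, div_eq_mul_inv]
  · exact setIntegral_congr_fun measurableSet_Ioc fun p hp => kappaDerivIntegrand_eq hx hp

end

theorem kappa_hasDerivAt_general (Λ : Measure ℝ) [IsFiniteMeasure Λ] :
    ∀ x : ℝ, 2 < x →
      HasDerivAt (kappa Λ)
        ((Λ {0}).toReal / 2 +
          ∫ y in (0:ℝ)..1, (1 - y) ^ (x - 1) * Real.log (1 / (1 - y)) * T Λ y) x := by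
  intro x hx
  have h := hasDerivAt_kappa Λ hx
  rw [integral_kappaDerivIntegrand Λ hx.le] at h
  exact h

/-- `κ` is differentiable on `(2,∞)` with derivative
`κ'(x) = Λ({0})/2 + ∫_0^1 (1−y)^{x−1} log(1/(1−y)) T(y) dy`. -/
theorem kappa_hasDerivAt (Λ : Measure ℝ) [IsFiniteMeasure Λ] (hΛ : Λ ≠ 0)
    (hsupp : Λ (Set.Icc (0:ℝ) 1)ᶜ = 0) :
    ∀ x : ℝ, 2 < x →
      HasDerivAt (kappa Λ)
        ((Λ {0}).toReal / 2 +
          ∫ y in (0:ℝ)..1, (1 - y) ^ (x - 1) * Real.log (1 / (1 - y)) * T Λ y) x :=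
  kappa_hasDerivAt_general Λ
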